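/- (Komlós' lemma) Let (f_n)_{n≥1} be a sequence of nonnegative random variables on (Ω, 𝓕, P) that is bounded in L^1(P). Then there exist a sequence of convex combinations f̃_n ∈ conv(f_n, f_{n+1}, …) and a nonnegative random variable f ∈ L^1(P) such that f̃_n → f P-almost surely. -/

import Mathlib

/-!
Let `K n` be the set of convex combinations of `f n, f (n+1), …` and pick `g n ∈ K n` nearly
minimising the strictly convex functional `Ψ g = ∫ exp (-g)` over `K n`. The infima increase to
a finite limit and `K` decreases, so for `n, m ≥ N` the midpoint of `g n` and `g m` lies in `K N`
and `Ψ` of it is almost as small as `Ψ (g n)` and `Ψ (g m)`. By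
`(e⁻ᵃ + e⁻ᵇ) / 2 - e^(-(a + b) / 2) = (e^(-a/2) - e^(-b/2))² / 2` this forces `g n` and `g m` to be
close in measure wherever both lie below a level `M`, while Markov's inequality makes
`{g n ≥ M}` uniformly small. So `(g n)` is Cauchy in measure, a subsequence converges almost
surely, and Fatou's lemma puts the limit in `L¹`.
-/

open MeasureTheory Filter Topology Set

noncomputable section

namespace OSS

variable {Ω : Type*} {m : MeasurableSpace Ω}

/-- The time index set `[0,1]`. -/
def I : Set ℝ := Set.Icc 0 1

/-- Left limit of a path at `t`, with the convention `f (0-) = 0`. -/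
noncomputable def leftLimAt (f : ℝ → ℝ) (t : ℝ) : ℝ :=
  if t = 0 then 0 else Function.leftLim f t

/-- Right limit of a path at `t`, with the convention `f (1+) = f 1`. -/
noncomputable def rightLimAt (f : ℝ → ℝ) (t : ℝ) : ℝ :=
  if t = 1 then f 1 else Function.rightLim f t

/-- A path is làdlàg on `[0,1]`: right limits exist on `[0,1)`, left limits exist on `(0,1]`. -/
def LadlagOn (f : ℝ → ℝ) : Prop :=
  (∀ t ∈ Set.Ico (0:ℝ) 1, ∃ l, Tendsto f (𝓝[>] t) (𝓝 l)) ∧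
  (∀ t ∈ Set.Ioc (0:ℝ) 1, ∃ l, Tendsto f (𝓝[<] t) (𝓝 l))

/-- A path is càdlàg on `[0,1]`. -/
def CadlagOn (f : ℝ → ℝ) : Prop :=
  (∀ t ∈ Set.Ico (0:ℝ) 1, ContinuousWithinAt f (Set.Ici t) t) ∧
  (∀ t ∈ Set.Ioc (0:ℝ) 1, ∃ l, Tendsto f (𝓝[<] t) (𝓝 l))

/-- A path is càdlàg on all of `ℝ` (used to generate the optional σ-algebra). -/
def Cadlag (f : ℝ → ℝ) : Prop :=
  (∀ t : ℝ, ContinuousWithinAt f (Set.Ici t) t) ∧ (∀ t : ℝ, ∃ l, Tendsto f (𝓝[<] t) (𝓝 l))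

/-- A path is left-continuous on all of `ℝ` (used to generate the predictable σ-algebra). -/
def Caglad (f : ℝ → ℝ) : Prop := ∀ t : ℝ, ContinuousWithinAt f (Set.Iic t) t

/-- Usual conditions: the filtration is right-continuous and complete. -/
def UsualConditions (𝓕 : Filtration ℝ m) (μ : Measure Ω) : Prop :=
  (∀ t : ℝ, (𝓕 t : MeasurableSpace Ω) = ⨅ (s : ℝ) (_ : t < s), 𝓕 s) ∧
  (∀ s : Set Ω, μ s = 0 → MeasurableSet[𝓕 0] s)

/-- A `[0,1]`-valued stopping time. -/
def IsStoppingTime01 (𝓕 : Filtration ℝ m) (τ : Ω → ℝ) : Prop :=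
  IsStoppingTime 𝓕 (fun ω => (τ ω : WithTop ℝ)) ∧ ∀ ω, τ ω ∈ I

/-- A `[0,1] ∪ {∞}`-valued stopping time, where the value `∞` is encoded by the
real number `2` (any event happening on `[0,1]` occurs strictly before `2`). -/
def IsStoppingTimeExt (𝓕 : Filtration ℝ m) (τ : Ω → ℝ) : Prop :=
  IsStoppingTime 𝓕 (fun ω => (τ ω : WithTop ℝ)) ∧ ∀ ω, τ ω ∈ I ∪ {2}

/-- Martingale property on the time interval `[0,1]`. -/
def MartingaleOn (𝓕 : Filtration ℝ m) (μ : Measure Ω) (M : ℝ → Ω → ℝ) : Prop :=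
  (∀ t ∈ I, StronglyMeasurable[𝓕 t] (M t)) ∧ (∀ t ∈ I, Integrable (M t) μ) ∧
  ∀ s ∈ I, ∀ t ∈ I, s ≤ t → μ[M t | 𝓕 s] =ᵐ[μ] M s

/-- Supermartingale property on the time interval `[0,1]`. -/
def SupermartingaleOn (𝓕 : Filtration ℝ m) (μ : Measure Ω) (X : ℝ → Ω → ℝ) : Prop :=
  (∀ t ∈ I, StronglyMeasurable[𝓕 t] (X t)) ∧ (∀ t ∈ I, Integrable (X t) μ) ∧
  ∀ s ∈ I, ∀ t ∈ I, s ≤ t → μ[X t | 𝓕 s] ≤ᵐ[μ] X s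

/-- Nonnegativity of a process on `[0,1]`. -/
def NonnegOn (X : ℝ → Ω → ℝ) : Prop := ∀ t ∈ I, ∀ ω : Ω, 0 ≤ X t ω

/-- The optional σ-algebra on `ℝ × Ω`: generated by all adapted càdlàg processes. -/
noncomputable def optionalSigma (𝓕 : Filtration ℝ m) : MeasurableSpace (ℝ × Ω) :=
  ⨆ Y : {Y : ℝ → Ω → ℝ // (∀ t, StronglyMeasurable[𝓕 t] (Y t)) ∧ ∀ ω, Cadlag fun t => Y t ω},
    MeasurableSpace.comap (fun p : ℝ × Ω => Y.1 p.1 p.2) inferInstance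

/-- A process is optional (on `[0,1]`) if it agrees on `[0,1]` with a process that is
measurable with respect to the optional σ-algebra. -/
def IsOptional (𝓕 : Filtration ℝ m) (X : ℝ → Ω → ℝ) : Prop :=
  ∃ Y : ℝ → Ω → ℝ, Measurable[optionalSigma 𝓕] (fun p : ℝ × Ω => Y p.1 p.2) ∧
    ∀ t ∈ I, ∀ ω : Ω, X t ω = Y t ω

/-- The predictable σ-algebra on `ℝ × Ω`: generated by all adapted left-continuous processes. -/
noncomputable def predictableSigma (𝓕 : Filtration ℝ m) : MeasurableSpace (ℝ × Ω) :=
  ⨆ Y : {Y : ℝ → Ω → ℝ // (∀ t, StronglyMeasurable[𝓕 t] (Y t)) ∧ ∀ ω, Caglad fun t => Y t ω},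
    MeasurableSpace.comap (fun p : ℝ × Ω => Y.1 p.1 p.2) inferInstance

/-- A process is predictable (on `[0,1]`) if it agrees on `[0,1]` with a process that is
measurable with respect to the predictable σ-algebra. -/
def IsPredictable (𝓕 : Filtration ℝ m) (X : ℝ → Ω → ℝ) : Prop :=
  ∃ Y : ℝ → Ω → ℝ, Measurable[predictableSigma 𝓕] (fun p : ℝ × Ω => Y p.1 p.2) ∧
    ∀ t ∈ I, ∀ ω : Ω, X t ω = Y t ω

/-- Optional strong supermartingale: optional, làdlàg, integrable at every `[0,1]`-valued
stopping time, and satisfying the supermartingale inequality at all pairs of stopping times. -/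
def IsOptionalStrongSupermartingale (𝓕 : Filtration ℝ m) (μ : Measure Ω) (X : ℝ → Ω → ℝ) :
    Prop :=
  IsOptional 𝓕 X ∧ (∀ ω, LadlagOn fun t => X t ω) ∧
  (∀ τ : Ω → ℝ, IsStoppingTime01 𝓕 τ → Integrable (fun ω => X (τ ω) ω) μ) ∧
  ∀ σ τ : Ω → ℝ, ∀ hσ : IsStoppingTime01 𝓕 σ, IsStoppingTime01 𝓕 τ → (∀ ω, σ ω ≤ τ ω) →
    μ[fun ω => X (τ ω) ω | hσ.1.measurableSpace] ≤ᵐ[μ] fun ω => X (σ ω) ω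

/-- A predictable stopping time: one admitting an announcing sequence. -/
def IsPredictableStoppingTime (𝓕 : Filtration ℝ m) (σ : Ω → ℝ) : Prop :=
  IsStoppingTime 𝓕 (fun ω => (σ ω : WithTop ℝ)) ∧ ∃ a : ℕ → Ω → ℝ, (∀ k, IsStoppingTime 𝓕 (fun ω => (a k ω : WithTop ℝ))) ∧
    (∀ k ω, a k ω ≤ a (k + 1) ω) ∧ (∀ ω, Tendsto (fun k => a k ω) atTop (𝓝 (σ ω))) ∧
    ∀ k ω, 0 < σ ω → a k ω < σ ω

/-- A totally inaccessible stopping time (for real-valued, hence finite, stopping times). -/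
def IsTotallyInaccessible (𝓕 : Filtration ℝ m) (μ : Measure Ω) (τ : Ω → ℝ) : Prop :=
  IsStoppingTime 𝓕 (fun ω => (τ ω : WithTop ℝ)) ∧
  ∀ σ : Ω → ℝ, IsPredictableStoppingTime 𝓕 σ → μ {ω | τ ω = σ ω} = 0

/-- The σ-algebra `𝓕_{σ-}`, generated by `𝓕 0` and the sets `A ∩ {t < σ}`, `A ∈ 𝓕 t`. -/
noncomputable def sigmaPre (𝓕 : Filtration ℝ m) (σ : Ω → ℝ) : MeasurableSpace Ω :=
  (𝓕 0 : MeasurableSpace Ω) ⊔ MeasurableSpace.generateFrom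
    {s : Set Ω | ∃ t ∈ I, ∃ A : Set Ω, MeasurableSet[𝓕 t] A ∧ s = A ∩ {ω | t < σ ω}}

/-- Predictable strong supermartingale. -/
def IsPredictableStrongSupermartingale (𝓕 : Filtration ℝ m) (μ : Measure Ω)
    (X : ℝ → Ω → ℝ) : Prop :=
  IsPredictable 𝓕 X ∧
  (∀ τ : Ω → ℝ, IsPredictableStoppingTime 𝓕 τ → (∀ ω, τ ω ∈ I) →
    Integrable (fun ω => X (τ ω) ω) μ) ∧
  ∀ σ τ : Ω → ℝ, IsPredictableStoppingTime 𝓕 σ → IsPredictableStoppingTime 𝓕 τ →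
    (∀ ω, σ ω ∈ I) → (∀ ω, τ ω ∈ I) → (∀ ω, σ ω ≤ τ ω) →
    μ[fun ω => X (τ ω) ω | sigmaPre 𝓕 σ] ≤ᵐ[μ] fun ω => X (σ ω) ω

/-- `g` is a (finite) convex combination of `f n, f (n+1), …`. -/
def ConvexCombFrom {α : Type*} [AddCommMonoid α] [Module ℝ α] (f : ℕ → α) (n : ℕ) (g : α) :
    Prop :=
  ∃ (N : ℕ) (w : ℕ → ℝ), (∀ k, 0 ≤ w k) ∧ (∀ k < n, w k = 0) ∧
    (∑ k ∈ Finset.range (N + 1), w k) = 1 ∧ g = ∑ k ∈ Finset.range (N + 1), w k • f k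

/-- Standard Brownian motion on `[0,1]` with respect to the filtration `𝓕`. -/
def IsBrownianMotion (𝓕 : Filtration ℝ m) (μ : Measure Ω) (W : ℝ → Ω → ℝ) : Prop :=
  (∀ t ∈ I, StronglyMeasurable[𝓕 t] (W t)) ∧
  (∀ ω, W 0 ω = 0) ∧
  (∀ ω, ContinuousOn (fun t => W t ω) I) ∧
  ∀ s t : ℝ, 0 ≤ s → s ≤ t → t ≤ 1 →
    ProbabilityTheory.Indep
      (MeasurableSpace.comap (fun ω => W t ω - W s ω) inferInstance) (𝓕 s) μ ∧
    Measure.map (fun ω => W t ω - W s ω) μ =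
      ProbabilityTheory.gaussianReal 0 (Real.toNNReal (t - s))

/-- Left jump `Δf_u = f u - f (u-)` (convention `f (0-) = 0`). -/
noncomputable def lJump (f : ℝ → ℝ) (u : ℝ) : ℝ := f u - leftLimAt f u

/-- Right jump `Δ₊f_u = f (u+) - f u` (convention `f (1+) = f 1`). -/
noncomputable def rJump (f : ℝ → ℝ) (u : ℝ) : ℝ := rightLimAt f u - f u

/-- `Σ_{0 < u ≤ t} Δf_u`. -/
noncomputable def sumLJumps (f : ℝ → ℝ) (t : ℝ) : ℝ :=
  ∑' u : ℝ, Set.indicator (Set.Ioc 0 t) (lJump f) u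

/-- `Σ_{0 ≤ u < t} Δ₊f_u`. -/
noncomputable def sumRJumps (f : ℝ → ℝ) (t : ℝ) : ℝ :=
  ∑' u : ℝ, Set.indicator (Set.Ico 0 t) (rJump f) u

/-- The continuous part `f^c` of a làdlàg finite-variation function `f`. -/
noncomputable def contPart (f : ℝ → ℝ) (t : ℝ) : ℝ := f t - sumLJumps f t - sumRJumps f t

/-- `v` is the Riemann–Stieltjes integral `∫_a^b f dg`. -/
def IsRSIntegral (f g : ℝ → ℝ) (a b v : ℝ) : Prop :=
  ∀ ε > (0:ℝ), ∃ δ > (0:ℝ), ∀ (n : ℕ) (t ξ : ℕ → ℝ),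
    0 < n → t 0 = a → t n = b → (∀ i < n, t i ≤ t (i + 1)) →
    (∀ i < n, t (i + 1) - t i < δ) → (∀ i < n, ξ i ∈ Set.Icc (t i) (t (i + 1))) →
    |(∑ i ∈ Finset.range n, f (ξ i) * (g (t (i + 1)) - g (t i))) - v| < ε

/-- The Riemann–Stieltjes integral `∫_a^b f dg` (junk value `0` if it does not exist). -/
noncomputable def rsIntegral (f g : ℝ → ℝ) (a b : ℝ) : ℝ :=
  letI := Classical.propDecidable (∃ v, IsRSIntegral f g a b v)
  if h : ∃ v, IsRSIntegral f g a b v then h.choose else 0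

/-- The pathwise integral `∫_0^t X_u dφ_u` of a làdlàg path against a finite-variation path. -/
noncomputable def intXdPhi (X φ : ℝ → ℝ) (t : ℝ) : ℝ :=
  rsIntegral X (contPart φ) 0 t
    + (∑' u : ℝ, Set.indicator (Set.Ioc 0 t) (fun u => leftLimAt X u * lJump φ u) u)
    + ∑' u : ℝ, Set.indicator (Set.Ico 0 t) (fun u => X u * rJump φ u) u

/-- The pathwise integral `(φ • X)_t = ∫_0^t φ_u dX_u` of a finite-variation path against a
làdlàg path. -/
noncomputable def intPhiDX (φ X : ℝ → ℝ) (t : ℝ) : ℝ :=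
  rsIntegral (contPart φ) X 0 t
    + (∑' u : ℝ, Set.indicator (Set.Ioc 0 t) (fun u => lJump φ u * (X t - leftLimAt X u)) u)
    + ∑' u : ℝ, Set.indicator (Set.Ico 0 t) (fun u => rJump φ u * (X t - X u)) u

/-- The path `f` makes at least `k` moves of size `> ε` on `[0,1]`. -/
def MovesAtLeast (ε : ℝ) (f : ℝ → ℝ) (k : ℕ) : Prop :=
  ∃ t : ℕ → ℝ, 0 ≤ t 0 ∧ t k ≤ 1 ∧ (∀ i < k, t i < t (i + 1)) ∧
    ∀ i < k, ε < |f (t (i + 1)) - f (t i)|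

/-- `M_ε(f)`: the maximal number of moves of size `> ε` of the path `f` on `[0,1]`. -/
noncomputable def moves (ε : ℝ) (f : ℝ → ℝ) : ℕ∞ :=
  ⨆ k ∈ {k : ℕ | MovesAtLeast ε f k}, (k : ℕ∞)

/-- The filter of rationals `q` with `t < q ≤ 1`, `q → t`. -/
def ratDown (t : ℝ) : Filter ℚ :=
  Filter.comap (fun q : ℚ => (q : ℝ)) ((𝓝[>] t) ⊓ Filter.principal (Set.Iic 1))

/-- The `m`-th dyadic grid on `[0,1]`. -/
def dyadics (k : ℕ) : Set ℝ := {t : ℝ | ∃ j : ℕ, j ≤ 2 ^ k ∧ t = (j : ℝ) / 2 ^ k}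

/-- The `m`-th dyadic approximation `inf{t ∈ D_m | t > τ} ∧ 1` of a stopping time `τ`. -/
noncomputable def dyadicApprox (k : ℕ) (τ : Ω → ℝ) (ω : Ω) : ℝ :=
  sInf ({t ∈ dyadics k | τ ω < t} ∪ {1})

section ConvexCombFrom

variable {α : Type*} [AddCommMonoid α] [Module ℝ α] {f : ℕ → α} {n : ℕ} {g : α}

theorem convexCombFrom_self (f : ℕ → α) (n : ℕ) : ConvexCombFrom f n (f n) :=
  ⟨n, Pi.single n 1, fun k => by by_cases h : k = n <;> simp [h],
    fun k hk => Pi.single_eq_of_ne hk.ne 1, by simp, by simp [Pi.single_apply]⟩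

theorem ConvexCombFrom.mono {n' : ℕ} (h : n' ≤ n) (hg : ConvexCombFrom f n g) :
    ConvexCombFrom f n' g := by
  obtain ⟨N, w, hw₀, hwn, hw₁, rfl⟩ := hg
  exact ⟨N, w, hw₀, fun k hk => hwn k (hk.trans_le h), hw₁, rfl⟩

theorem ConvexCombFrom.mem_of_convex {β : Type*} [AddCommGroup β] [Module ℝ β] {f : ℕ → β}
    {g : β} {s : Set β} (hs : Convex ℝ s) (hf : ∀ k, f k ∈ s) (hg : ConvexCombFrom f n g) :
    g ∈ s := by
  obtain ⟨N, w, hw₀, -, hw₁, rfl⟩ := hg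
  exact hs.sum_mem (fun k _ => hw₀ k) hw₁ fun k _ => hf k

theorem ConvexCombFrom.exists_weights (hg : ConvexCombFrom f n g) :
    ∃ (N : ℕ) (w : ℕ → ℝ), (∀ k, 0 ≤ w k) ∧ (∀ k < n, w k = 0) ∧ ∀ M, N ≤ M →
      (∑ k ∈ Finset.range (M + 1), w k) = 1 ∧ g = ∑ k ∈ Finset.range (M + 1), w k • f k := by
  obtain ⟨N, w, hw₀, hwn, hw₁, rfl⟩ := hg
  set r : Set ℕ := ↑(Finset.range (N + 1))
  refine ⟨N, r.indicator w, fun k => Set.indicator_nonneg (fun k _ => hw₀ k) k,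
    fun k hk => by simp only [r, Set.indicator_apply, hwn k hk, ite_self], fun M hM => ?_⟩
  have hsub : Finset.range (N + 1) ⊆ Finset.range (M + 1) := by gcongr
  simp_rw [← Set.indicator_smul_apply_left]
  exact ⟨by rw [Finset.sum_indicator_subset w hsub, hw₁],
    (Finset.sum_indicator_subset (fun k => w k • f k) hsub).symm⟩

theorem convex_setOf_convexCombFrom (f : ℕ → α) (n : ℕ) :
    Convex ℝ {g | ConvexCombFrom f n g} := by
  rintro g₁ hg₁ g₂ hg₂ a b ha hb hab
  obtain ⟨N₁, w₁, hw₁₀, hw₁n, hw₁⟩ := hg₁.exists_weights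
  obtain ⟨N₂, w₂, hw₂₀, hw₂n, hw₂⟩ := hg₂.exists_weights
  obtain ⟨hs₁, rfl⟩ := hw₁ (max N₁ N₂) (le_max_left _ _)
  obtain ⟨hs₂, rfl⟩ := hw₂ (max N₁ N₂) (le_max_right _ _)
  refine ⟨max N₁ N₂, a • w₁ + b • w₂, fun k => ?_, fun k hk => ?_, ?_, ?_⟩
  · simp only [Pi.add_apply, Pi.smul_apply, smul_eq_mul]
    exact add_nonneg (mul_nonneg ha (hw₁₀ k)) (mul_nonneg hb (hw₂₀ k))
  · simp [hw₁n k hk, hw₂n k hk]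
  · simp [Finset.sum_add_distrib, ← Finset.mul_sum, hs₁, hs₂, hab]
  · simp [add_smul, mul_smul, Finset.sum_add_distrib, Finset.smul_sum]

end ConvexCombFrom

section ExpNeg

open Real

theorem exp_neg_midpoint_defect_eq (a b : ℝ) :
    (exp (-a) + exp (-b)) / 2 - exp (-(2⁻¹ * a + 2⁻¹ * b)) =
      (exp (-(a / 2)) - exp (-(b / 2))) ^ 2 / 2 := by
  have hsq : ∀ x : ℝ, exp (-x) = exp (-(x / 2)) ^ 2 := fun x => by
    rw [sq, ← exp_add]; ring_nf
  have hmid : exp (-(2⁻¹ * a + 2⁻¹ * b)) = exp (-(a / 2)) * exp (-(b / 2)) := by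
    rw [← exp_add]; ring_nf
  rw [hsq a, hsq b, hmid]
  ring

theorem le_exp_neg_half_sub_exp_neg_half {a b M ε : ℝ} (ha : a ≤ M) (hε : 0 ≤ ε)
    (hab : a + ε ≤ b) :
    exp (-(M / 2)) * (1 - exp (-(ε / 2))) ≤ exp (-(a / 2)) - exp (-(b / 2)) := by
  have hb : exp (-(b / 2)) ≤ exp (-(a / 2)) * exp (-(ε / 2)) := by
    rw [← exp_add]; gcongr; linarith
  have hM : exp (-(M / 2)) ≤ exp (-(a / 2)) := by gcongr
  have hε' : 0 ≤ 1 - exp (-(ε / 2)) := by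
    rw [sub_nonneg]; exact exp_le_one_iff.2 (by linarith)
  nlinarith [mul_le_mul_of_nonneg_right hM hε']

theorem le_exp_neg_midpoint_defect {a b M ε : ℝ} (ha : a ≤ M) (hb : b ≤ M) (hε : 0 ≤ ε)
    (hab : ε ≤ |a - b|) :
    (exp (-(M / 2)) * (1 - exp (-(ε / 2)))) ^ 2 / 2 ≤
      (exp (-a) + exp (-b)) / 2 - exp (-(2⁻¹ * a + 2⁻¹ * b)) := by
  rw [exp_neg_midpoint_defect_eq, ← sq_abs (exp _ - exp _)]
  have hδ : 0 ≤ exp (-(M / 2)) * (1 - exp (-(ε / 2))) :=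
    mul_nonneg (exp_pos _).le (sub_nonneg.2 (exp_le_one_iff.2 (by linarith)))
  gcongr
  rcases le_total a b with h | h
  · rw [abs_of_nonpos (by linarith)] at hab
    rw [abs_of_nonneg (sub_nonneg.2 (exp_le_exp.2 (by linarith)))]
    exact le_exp_neg_half_sub_exp_neg_half ha hε (by linarith)
  · rw [abs_of_nonneg (by linarith)] at hab
    rw [abs_sub_comm, abs_of_nonneg (sub_nonneg.2 (exp_le_exp.2 (by linarith)))]
    exact le_exp_neg_half_sub_exp_neg_half hb hε (by linarith)

end ExpNeg

/-- `x n` nearly minimises `Ψ` over `K n`. The midpoint of `x n` and `x m` lies in `K N`, where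
`Ψ` is at least its infimum, and these infima increase to a finite limit. -/
theorem exists_seq_mem_midpoint_defect_le {E : Type*} [AddCommGroup E] [Module ℝ E]
    {K : ℕ → Set E} {Ψ : E → ℝ} (hK_anti : Antitone K) (hK_convex : ∀ n, Convex ℝ (K n))
    (hK_ne : ∀ n, (K n).Nonempty) (hΨ_below : BddBelow (Ψ '' K 0))
    (hΨ_above : BddAbove (Ψ '' K 0)) :
    ∃ x : ℕ → E, (∀ n, x n ∈ K n) ∧ ∃ r : ℕ → ℝ, Tendsto r atTop (𝓝 0) ∧
      ∀ N n m, N ≤ n → N ≤ m →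
        (Ψ (x n) + Ψ (x m)) / 2 - Ψ ((2⁻¹ : ℝ) • x n + (2⁻¹ : ℝ) • x m) ≤ r N := by
  set β : ℕ → ℝ := fun n => sInf (Ψ '' K n)
  have hβ_le : ∀ n, ∀ x ∈ K n, β n ≤ Ψ x := fun n x hx =>
    csInf_le (hΨ_below.mono (image_mono (hK_anti n.zero_le))) (mem_image_of_mem Ψ hx)
  have hβ_mono : Monotone β := fun n m h =>
    le_csInf ((hK_ne m).image Ψ) (forall_mem_image.2 fun x hx => hβ_le n x (hK_anti h hx))
  have hβ_bdd : BddAbove (range β) := by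
    obtain ⟨U, hU⟩ := hΨ_above
    refine ⟨U, forall_mem_range.2 fun n => ?_⟩
    obtain ⟨x, hx⟩ := hK_ne n
    exact (hβ_le n x hx).trans (hU (mem_image_of_mem Ψ (hK_anti n.zero_le hx)))
  have hnear : ∀ n : ℕ, ∃ x ∈ K n, Ψ x < β n + 1 / (n + 1) := fun n => by
    obtain ⟨_, ⟨x, hx, rfl⟩, hlt⟩ := exists_lt_of_csInf_lt ((hK_ne n).image Ψ)
      (lt_add_of_pos_right (β n) Nat.one_div_pos_of_nat)
    exact ⟨x, hx, hlt⟩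
  choose x hxK hx using hnear
  refine ⟨x, hxK, fun N => (⨆ n, β n) - β N + 1 / (N + 1), ?_, fun N n m hn hm => ?_⟩
  · simpa using ((tendsto_const_nhds (x := ⨆ n, β n)).sub
      (tendsto_atTop_ciSup hβ_mono hβ_bdd)).add tendsto_one_div_add_atTop_nhds_zero_nat
  have hmid : β N ≤ Ψ ((2⁻¹ : ℝ) • x n + (2⁻¹ : ℝ) • x m) :=
    hβ_le N _ (hK_convex N (hK_anti hn (hxK n)) (hK_anti hm (hxK m)) (by norm_num) (by norm_num)
      (by norm_num))
  have hnear_le : ∀ k, N ≤ k → Ψ (x k) ≤ (⨆ n, β n) + 1 / (N + 1) := fun k hk =>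
    (hx k).le.trans (add_le_add (le_ciSup hβ_bdd k) (Nat.one_div_le_one_div hk))
  linarith [hnear_le n hn, hnear_le m hm]

open scoped ENNReal

def CauchyInMeasure {E : Type*} [Dist E] (μ : Measure Ω) (f : ℕ → Ω → E) : Prop :=
  ∀ ε > 0, Tendsto (fun p : ℕ × ℕ => μ {ω | ε ≤ dist (f p.1 ω) (f p.2 ω)}) atTop (𝓝 0)

/-- Borel–Cantelli along a subsequence on which consecutive terms are `2⁻¹ ^ k`-close outside a
set of measure `2⁻¹ ^ k`. -/
theorem CauchyInMeasure.exists_seq_tendsto_ae {E : Type*} [PseudoMetricSpace E] [CompleteSpace E]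
    {μ : Measure Ω} {f : ℕ → Ω → E} (hf : CauchyInMeasure μ f) :
    ∃ φ : ℕ → ℕ, StrictMono φ ∧ ∀ᵐ ω ∂μ, ∃ l, Tendsto (fun k => f (φ k) ω) atTop (𝓝 l) := by
  have hsmall : ∀ k : ℕ, ∃ N, ∀ j ≥ N, ∀ n m, j ≤ n → j ≤ m →
      μ {ω | (2⁻¹ : ℝ) ^ k ≤ dist (f n ω) (f m ω)} ≤ 2⁻¹ ^ k := fun k => by
    have hpos : (0 : ℝ≥0∞) < 2⁻¹ ^ k := ENNReal.pow_pos (by norm_num) k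
    obtain ⟨N, hN⟩ := eventually_atTop_prod_self.1 <|
      (hf ((2⁻¹ : ℝ) ^ k) (by positivity)).eventually (ge_mem_nhds hpos)
    exact ⟨N, fun j hj n m hn hm => hN n m (hj.trans hn) (hj.trans hm)⟩
  obtain ⟨φ, hφ, hφsmall⟩ := extraction_forall_of_eventually' hsmall
  set s : ℕ → Set Ω := fun k => {ω | (2⁻¹ : ℝ) ^ k ≤ dist (f (φ k) ω) (f (φ (k + 1)) ω)}
  have hs : (∑' k, μ (s k)) ≠ ∞ :=
    ne_top_of_le_ne_top (by simp : ∑' k : ℕ, (2⁻¹ : ℝ≥0∞) ^ k ≠ ∞)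
      (ENNReal.tsum_le_tsum fun k => hφsmall k _ _ le_rfl (hφ k.lt_succ_self).le)
  refine ⟨φ, hφ, ?_⟩
  filter_upwards [ae_eventually_notMem hs] with ω hω
  refine cauchySeq_tendsto_of_complete (cauchySeq_of_summable_dist ?_)
  have hgeom : Summable fun k : ℕ => (2⁻¹ : ℝ) ^ k :=
    summable_geometric_of_lt_one (by norm_num) (by norm_num)
  refine hgeom.of_norm_bounded_eventually_nat ?_
  filter_upwards [hω] with k hk
  simp only [s, mem_ofPred_eq, not_le] at hk
  rw [Real.norm_of_nonneg dist_nonneg]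
  exact hk.le

theorem integrable_of_tendsto_ae_of_integral_norm_le {E : Type*} [NormedAddCommGroup E]
    {μ : Measure Ω} {f : ℕ → Ω → E} {g : Ω → E} {C : ℝ} (hf : ∀ n, Integrable (f n) μ)
    (hC : ∀ n, ∫ ω, ‖f n ω‖ ∂μ ≤ C) (hfg : ∀ᵐ ω ∂μ, Tendsto (fun n => f n ω) atTop (𝓝 (g ω))) :
    Integrable g μ := by
  have hbound : ∀ n, eLpNorm (f n) 1 μ ≤ ENNReal.ofReal C := fun n => by
    rw [eLpNorm_one_eq_lintegral_enorm, ← ofReal_integral_norm_eq_lintegral_enorm (hf n)]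
    exact ENNReal.ofReal_le_ofReal (hC n)
  refine memLp_one_iff_integrable.1
    ⟨aestronglyMeasurable_of_tendsto_ae atTop (fun n => (hf n).1) hfg, ?_⟩
  exact (Lp.eLpNorm_le_of_ae_tendsto (Eventually.of_forall hbound) (fun n => (hf n).1) hfg).trans_lt
    ENNReal.ofReal_lt_top

theorem convex_setOf_integral_le (μ : Measure Ω) (C : ℝ) :
    Convex ℝ {g : Ω → ℝ | 0 ≤ᵐ[μ] g ∧ Integrable g μ ∧ ∫ ω, g ω ∂μ ≤ C} := by
  rintro g₁ ⟨h₁, hi₁, hC₁⟩ g₂ ⟨h₂, hi₂, hC₂⟩ a b ha hb hab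
  refine ⟨?_, (hi₁.smul a).add (hi₂.smul b), ?_⟩
  · filter_upwards [h₁, h₂] with ω hω₁ hω₂
    simp only [Pi.add_apply, Pi.smul_apply, smul_eq_mul, Pi.zero_apply] at hω₁ hω₂ ⊢
    positivity
  · simp only [Pi.add_apply, Pi.smul_apply, smul_eq_mul]
    rw [integral_add (hi₁.const_mul a) (hi₂.const_mul b), integral_const_mul, integral_const_mul]
    calc a * ∫ ω, g₁ ω ∂μ + b * ∫ ω, g₂ ω ∂μ ≤ a * C + b * C := by gcongr
      _ = C := by rw [← add_mul, hab, one_mul]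

def expNegIntegral (μ : Measure Ω) (g : Ω → ℝ) : ℝ := ∫ ω, Real.exp (-g ω) ∂μ

theorem expNegIntegral_nonneg (μ : Measure Ω) (g : Ω → ℝ) : 0 ≤ expNegIntegral μ g :=
  integral_nonneg fun _ => (Real.exp_pos _).le

section FiniteMeasure

variable {μ : Measure Ω} [IsFiniteMeasure μ] {g : Ω → ℝ}

theorem integrable_exp_neg (hg : AEStronglyMeasurable g μ) (h0 : 0 ≤ᵐ[μ] g) :
    Integrable (fun ω => Real.exp (-g ω)) μ :=
  (integrable_const (1 : ℝ)).mono' (Real.continuous_exp.comp_aestronglyMeasurable hg.neg)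
    (h0.mono fun ω hω => by simpa using hω)

theorem expNegIntegral_le_measureReal_univ (hg : AEStronglyMeasurable g μ) (h0 : 0 ≤ᵐ[μ] g) :
    expNegIntegral μ g ≤ μ.real univ := by
  simpa [expNegIntegral] using integral_mono_ae (integrable_exp_neg hg h0) (integrable_const 1)
    (h0.mono fun ω hω => Real.exp_le_one_iff.2 (neg_nonpos.2 hω))

theorem integral_exp_neg_midpoint_defect {g₁ g₂ : Ω → ℝ} (hg₁ : AEStronglyMeasurable g₁ μ)
    (hg₂ : AEStronglyMeasurable g₂ μ) (h₁ : 0 ≤ᵐ[μ] g₁) (h₂ : 0 ≤ᵐ[μ] g₂) :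
    Integrable (fun ω => (Real.exp (-g₁ ω) + Real.exp (-g₂ ω)) / 2 -
        Real.exp (-(2⁻¹ * g₁ ω + 2⁻¹ * g₂ ω))) μ ∧
      ∫ ω, (Real.exp (-g₁ ω) + Real.exp (-g₂ ω)) / 2 -
          Real.exp (-(2⁻¹ * g₁ ω + 2⁻¹ * g₂ ω)) ∂μ =
        (expNegIntegral μ g₁ + expNegIntegral μ g₂) / 2 -
          expNegIntegral μ ((2⁻¹ : ℝ) • g₁ + (2⁻¹ : ℝ) • g₂) := by
  have hmid : 0 ≤ᵐ[μ] (2⁻¹ : ℝ) • g₁ + (2⁻¹ : ℝ) • g₂ := by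
    filter_upwards [h₁, h₂] with ω hω₁ hω₂
    simp only [Pi.add_apply, Pi.smul_apply, smul_eq_mul, Pi.zero_apply] at hω₁ hω₂ ⊢
    positivity
  have e₁ := integrable_exp_neg hg₁ h₁
  have e₂ := integrable_exp_neg hg₂ h₂
  have e₃ : Integrable (fun ω => Real.exp (-(2⁻¹ * g₁ ω + 2⁻¹ * g₂ ω))) μ :=
    integrable_exp_neg ((hg₁.const_smul (2⁻¹ : ℝ)).add (hg₂.const_smul (2⁻¹ : ℝ))) hmid
  refine ⟨((e₁.add e₂).div_const 2).sub e₃, ?_⟩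
  rw [integral_sub (f := fun ω => (Real.exp (-g₁ ω) + Real.exp (-g₂ ω)) / 2)
    ((e₁.add e₂).div_const 2) e₃, integral_div, integral_add e₁ e₂]
  rfl

/-- Where `g₁, g₂ < M` and `|g₁ - g₂| ≥ ε`, the pointwise midpoint defect of `exp ∘ neg` is at
least `δ`; the rest of `{|g₁ - g₂| ≥ ε}` is controlled by Markov's inequality. -/
theorem exists_measureReal_le_expNegIntegral_defect {ε M : ℝ} (hε : 0 < ε) (hM : 0 < M) :
    ∃ δ > 0, ∀ g₁ g₂ : Ω → ℝ, 0 ≤ᵐ[μ] g₁ → 0 ≤ᵐ[μ] g₂ → Integrable g₁ μ → Integrable g₂ μ →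
      μ.real {ω | ε ≤ |g₁ ω - g₂ ω|} ≤
        ((expNegIntegral μ g₁ + expNegIntegral μ g₂) / 2 -
            expNegIntegral μ ((2⁻¹ : ℝ) • g₁ + (2⁻¹ : ℝ) • g₂)) / δ +
          (∫ ω, g₁ ω ∂μ + ∫ ω, g₂ ω ∂μ) / M := by
  set δ := (Real.exp (-(M / 2)) * (1 - Real.exp (-(ε / 2)))) ^ 2 / 2
  have hδ : 0 < δ := div_pos (pow_pos (mul_pos (Real.exp_pos _)
    (sub_pos.2 (Real.exp_lt_one_iff.2 (by linarith)))) 2) two_pos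
  refine ⟨δ, hδ, fun g₁ g₂ h₁ h₂ hi₁ hi₂ => ?_⟩
  set defect : Ω → ℝ := fun ω =>
    (Real.exp (-g₁ ω) + Real.exp (-g₂ ω)) / 2 - Real.exp (-(2⁻¹ * g₁ ω + 2⁻¹ * g₂ ω))
  have hdefect_nonneg : 0 ≤ defect := fun ω => by
    simp only [defect, exp_neg_midpoint_defect_eq, Pi.zero_apply]
    positivity
  obtain ⟨hdefect_int, hdefect_integral⟩ :=
    integral_exp_neg_midpoint_defect hi₁.1 hi₂.1 h₁ h₂
  have hsub : {ω | ε ≤ |g₁ ω - g₂ ω|} ⊆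
      {ω | δ ≤ defect ω} ∪ ({ω | M ≤ g₁ ω} ∪ {ω | M ≤ g₂ ω}) := by
    intro ω hω
    by_contra h
    simp only [mem_union, mem_ofPred_eq, not_or, not_le] at h
    exact h.1.not_ge (le_exp_neg_midpoint_defect h.2.1.le h.2.2.le hε.le hω)
  have hmarkov_defect :=
    mul_meas_ge_le_integral_of_nonneg (Eventually.of_forall hdefect_nonneg) hdefect_int δ
  have hmarkov₁ := mul_meas_ge_le_integral_of_nonneg h₁ hi₁ M
  have hmarkov₂ := mul_meas_ge_le_integral_of_nonneg h₂ hi₂ M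
  calc μ.real {ω | ε ≤ |g₁ ω - g₂ ω|}
      ≤ μ.real {ω | δ ≤ defect ω} + (μ.real {ω | M ≤ g₁ ω} + μ.real {ω | M ≤ g₂ ω}) :=
        (measureReal_mono hsub).trans <| (measureReal_union_le _ _).trans <|
          add_le_add_right (measureReal_union_le _ _) _
    _ ≤ (∫ ω, defect ω ∂μ) / δ + ((∫ ω, g₁ ω ∂μ) / M + (∫ ω, g₂ ω ∂μ) / M) :=
        add_le_add ((le_div_iff₀' hδ).2 hmarkov_defect)
          (add_le_add ((le_div_iff₀' hM).2 hmarkov₁) ((le_div_iff₀' hM).2 hmarkov₂))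
    _ = _ := by rw [hdefect_integral, add_div (∫ ω, g₁ ω ∂μ)]

theorem exists_cauchyInMeasure_of_convex {K : ℕ → Set (Ω → ℝ)} {C : ℝ} (hK_anti : Antitone K)
    (hK_convex : ∀ n, Convex ℝ (K n)) (hK_ne : ∀ n, (K n).Nonempty)
    (hK : ∀ g ∈ K 0, 0 ≤ᵐ[μ] g ∧ Integrable g μ ∧ ∫ ω, g ω ∂μ ≤ C) :
    ∃ g : ℕ → Ω → ℝ, (∀ n, g n ∈ K n) ∧ CauchyInMeasure μ g := by
  obtain ⟨g, hgK, r, hr, hdefect⟩ := exists_seq_mem_midpoint_defect_le (Ψ := expNegIntegral μ)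
    hK_anti hK_convex hK_ne ⟨0, forall_mem_image.2 fun g _ => expNegIntegral_nonneg μ g⟩
    ⟨μ.real univ, forall_mem_image.2 fun g hg =>
      expNegIntegral_le_measureReal_univ (hK g hg).2.1.1 (hK g hg).1⟩
  have hg : ∀ n, 0 ≤ᵐ[μ] g n ∧ Integrable (g n) μ ∧ ∫ ω, g n ω ∂μ ≤ C := fun n =>
    hK _ (hK_anti n.zero_le (hgK n))
  refine ⟨g, hgK, fun ε hε => ?_⟩
  rw [← ENNReal.tendsto_toReal_iff (fun _ => measure_ne_top μ _) ENNReal.zero_ne_top]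
  refine Metric.tendsto_atTop.2 fun η hη => ?_
  obtain ⟨M, hM, hM_pos⟩ := (((tendsto_const_div_atTop_nhds_zero_nat (2 * C)).eventually
    (gt_mem_nhds (half_pos hη))).and (eventually_gt_atTop 0)).exists
  obtain ⟨δ, hδ, hμ⟩ := exists_measureReal_le_expNegIntegral_defect (μ := μ) hε
    (Nat.cast_pos.2 hM_pos)
  obtain ⟨N, hN⟩ := (hr.eventually (gt_mem_nhds (mul_pos hδ (half_pos hη)))).exists
  refine ⟨(N, N), fun p hp => ?_⟩
  simp only [ENNReal.toReal_zero, Real.dist_eq, sub_zero]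
  rw [abs_of_nonneg ENNReal.toReal_nonneg]
  calc μ.real {ω | ε ≤ |g p.1 ω - g p.2 ω|}
      ≤ ((expNegIntegral μ (g p.1) + expNegIntegral μ (g p.2)) / 2 -
            expNegIntegral μ ((2⁻¹ : ℝ) • g p.1 + (2⁻¹ : ℝ) • g p.2)) / δ +
          (∫ ω, g p.1 ω ∂μ + ∫ ω, g p.2 ω ∂μ) / M :=
        hμ _ _ (hg p.1).1 (hg p.2).1 (hg p.1).2.1 (hg p.2).2.1
    _ ≤ r N / δ + 2 * C / M := by
        gcongr
        · exact hdefect N p.1 p.2 hp.1 hp.2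
        · linarith [(hg p.1).2.2, (hg p.2).2.2]
    _ < η / 2 + η / 2 := add_lt_add ((div_lt_iff₀ hδ).2 (by linarith)) hM
    _ = η := add_halves η

end FiniteMeasure

/-- Komlós' lemma: For an `L¹`-bounded sequence of nonnegative random
variables `(f_n)` there are convex combinations `f̃_n ∈ conv(f_n, f_{n+1}, …)` and a
nonnegative `f ∈ L¹` with `f̃_n → f` almost surely. -/
theorem komlos_lemma
    {Ω : Type*} {m : MeasurableSpace Ω} (μ : Measure Ω) [IsProbabilityMeasure μ]
    (f : ℕ → Ω → ℝ) (hint : ∀ n, Integrable (f n) μ) (hnonneg : ∀ n ω, 0 ≤ f n ω)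
    (hbdd : ∃ C : ℝ, ∀ n, ∫ ω, f n ω ∂μ ≤ C) :
    ∃ (ft : ℕ → Ω → ℝ) (g : Ω → ℝ),
      (∀ n, ConvexCombFrom f n (ft n)) ∧ Integrable g μ ∧ (∀ ω, 0 ≤ g ω) ∧
      ∀ᵐ ω ∂μ, Tendsto (fun n => ft n ω) atTop (𝓝 (g ω)) := by
  obtain ⟨C, hC⟩ := hbdd
  have hK : ∀ g, ConvexCombFrom f 0 g →
      g ∈ {g : Ω → ℝ | 0 ≤ᵐ[μ] g ∧ Integrable g μ ∧ ∫ ω, g ω ∂μ ≤ C} :=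
    fun g hg => hg.mem_of_convex (convex_setOf_integral_le μ C) fun n =>
      ⟨Eventually.of_forall (hnonneg n), hint n, hC n⟩
  obtain ⟨G, hGK, hG⟩ := exists_cauchyInMeasure_of_convex (μ := μ)
    (K := fun n => {g | ConvexCombFrom f n g}) (fun _ _ h _ hg => ConvexCombFrom.mono h hg)
    (convex_setOf_convexCombFrom f) (fun n => ⟨f n, convexCombFrom_self f n⟩) hK
  have hG_bdd : ∀ n, 0 ≤ᵐ[μ] G n ∧ Integrable (G n) μ ∧ ∫ ω, G n ω ∂μ ≤ C := fun n =>
    hK _ ((hGK n).mono n.zero_le)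
  obtain ⟨φ, hφ, hconv⟩ := hG.exists_seq_tendsto_ae
  -- `limUnder` is arbitrary where the sequence diverges; the `max` keeps `g` nonnegative there.
  set g : Ω → ℝ := fun ω => max (limUnder atTop fun k => G (φ k) ω) 0
  have hlim : ∀ᵐ ω ∂μ, Tendsto (fun k => G (φ k) ω) atTop (𝓝 (g ω)) := by
    filter_upwards [hconv, ae_all_iff.2 fun n => (hG_bdd n).1] with ω ⟨l, hl⟩ hnn
    have hgl : g ω = l := (congrArg (max · 0) hl.limUnder_eq).trans
      (max_eq_left (ge_of_tendsto' hl fun k => hnn (φ k)))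
    rwa [hgl]
  refine ⟨fun k => G (φ k), g, fun k => (hGK (φ k)).mono (hφ.id_le k), ?_,
    fun ω => le_max_right _ _, hlim⟩
  refine integrable_of_tendsto_ae_of_integral_norm_le (C := C) (fun k => (hG_bdd (φ k)).2.1)
    (fun k => ?_) hlim
  rw [integral_congr_ae ((hG_bdd (φ k)).1.mono fun ω hω => Real.norm_of_nonneg hω)]
  exact (hG_bdd (φ k)).2.2

end OSS
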